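/- arXiv:2304.07144 — 7 statements merged into one kernel-verified Lean document; each statement's English description precedes it below -/
import Mathlib

section
/- Let x : ℕ → ℤ be a path with x 0 = 0 and |x (j+1) - x j| ≤ 1 for all j (steps in {-1,0,1}). Fix a horizon t and a nonnegative integer g. Define the transformation T_g(x)(j) = x j - 2 * max(0, (max over i ≤ j of x i) - g). Then for every j ≤ t, the running maximum of T_g(x) satisfies max over i ≤ j of T_g(x)(i) = min(g, max over i ≤ j of x i). -/
/-- Running maximum `max_{0 ≤ i ≤ j} x i`. -/
noncomputable def runMax (x : ℕ → ℤ) (j : ℕ) : ℤ :=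
  (Finset.range (j + 1)).sup' (Finset.nonempty_range_iff.mpr (Nat.succ_ne_zero j)) x

/-- Pitman-type transformation `T_g(x)(j) = x j - 2 * ((max_{0 ≤ i ≤ j} x i) - g)₊`. -/
noncomputable def Ttrop (g : ℤ) (x : ℕ → ℤ) (j : ℕ) : ℤ :=
  x j - 2 * max (runMax x j - g) 0

lemma runMax_zero (x : ℕ → ℤ) : runMax x 0 = x 0 := by
  simp [runMax]

lemma runMax_succ (x : ℕ → ℤ) (j : ℕ) :
    runMax x (j + 1) = max (x (j + 1)) (runMax x j) := by
  simp [runMax, Finset.range_add_one, Finset.sup'_insert]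

lemma le_runMax (x : ℕ → ℤ) (j : ℕ) : x j ≤ runMax x j :=
  Finset.le_sup' x (Finset.self_mem_range_succ j)

/-- For a path starting at 0 with steps in `{-1,0,1}` and `g ≥ 0`, the running maximum of
`T_g(x)` equals `min (g, running maximum of x)`, for every `j ≤ t`. -/
theorem runMax_Ttrop (x : ℕ → ℤ) (hx0 : x 0 = 0)
    (hstep : ∀ j : ℕ, x (j + 1) - x j ∈ ({-1, 0, 1} : Set ℤ))
    (t : ℕ) (g : ℤ) (hg : 0 ≤ g) :
    ∀ j ≤ t, runMax (Ttrop g x) j = min g (runMax x j) := by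
  suffices h : ∀ j, runMax (Ttrop g x) j = min g (runMax x j) by
    intro j _; exact h j
  intro j
  induction j with
  | zero =>
    rw [runMax_zero, runMax_zero, Ttrop, runMax_zero, hx0]
    omega
  | succ j ih =>
    have hs : x (j + 1) - x j = -1 ∨ x (j + 1) - x j = 0 ∨ x (j + 1) - x j = 1 := by
      simpa using hstep j
    have hle : x j ≤ runMax x j := le_runMax x j
    rw [runMax_succ, ih, Ttrop, runMax_succ]
    omega
end

section
/- Let x be a path in C⟦0,t⟧ (x 0 = 0, steps in {-1,0,1}) with K = min_{0 ≤ i ≤ t} x i. For K ≤ r ≤ x t let s^r be defined by s^r_j = 2*(min(r, min_{j ≤ i ≤ t} x i) - K) - x j. Then s^r is itself a path with steps in {-1,0,1}, the number of zero (horizontal) steps of s^r equals that of x, the number of up steps of s^r equals r - K + D(x), and the number of down steps of s^r equals K - r + U(x), where U(x) and D(x) count the up and down steps of x respectively. -/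
/-- Backward running minimum `K_j(x) = min_{j ≤ i ≤ t} x i` (for `j ≤ t`). -/
noncomputable def backMin (x : ℕ → ℤ) (t j : ℕ) : ℤ :=
  (Finset.Icc (min j t) t).inf' (Finset.nonempty_Icc.mpr (min_le_right j t)) x

/-- `x ∈ C⟦0,t⟧`: `x 0 = 0` and steps in `{-1,0,1}` up to time `t`. -/
def IsPath (t : ℕ) (x : ℕ → ℤ) : Prop :=
  x 0 = 0 ∧ ∀ j : ℕ, 1 ≤ j → j ≤ t → x j - x (j - 1) ∈ ({-1, 0, 1} : Set ℤ)

/-- The path `s^r_j = 2*(min(r, K_j(x)) - K) - x j`, where `K = K_0(x)`. -/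
noncomputable def sr (x : ℕ → ℤ) (t : ℕ) (r : ℤ) (j : ℕ) : ℤ :=
  2 * (min r (backMin x t j) - backMin x t 0) - x j

/-- Number of up steps of `x` on `⟦1,t⟧`. -/
def Uc (t : ℕ) (x : ℕ → ℤ) : ℕ :=
  ((Finset.Icc 1 t).filter (fun j => x j - x (j - 1) = 1)).card

/-- Number of down steps of `x` on `⟦1,t⟧`. -/
def Dc (t : ℕ) (x : ℕ → ℤ) : ℕ :=
  ((Finset.Icc 1 t).filter (fun j => x j - x (j - 1) = -1)).card

/-- Number of horizontal steps of `x` on `⟦1,t⟧`. -/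
def Hc (t : ℕ) (x : ℕ → ℤ) : ℕ :=
  ((Finset.Icc 1 t).filter (fun j => x j = x (j - 1))).card

/-- Running minimum truncated at `r`. -/
noncomputable def gm (x : ℕ → ℤ) (t : ℕ) (r : ℤ) (j : ℕ) : ℤ := min r (backMin x t j)

lemma backMin_le (x : ℕ → ℤ) (t : ℕ) {j i : ℕ} (hji : j ≤ i) (hit : i ≤ t) :
    backMin x t j ≤ x i :=
  Finset.inf'_le _ (by simp only [Finset.mem_Icc]; omega)

lemma backMin_t (x : ℕ → ℤ) (t : ℕ) : backMin x t t = x t := by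
  simp [backMin, Finset.Icc_self]

lemma backMin_rec (x : ℕ → ℤ) (t : ℕ) {j : ℕ} (h1 : 1 ≤ j) (h2 : j ≤ t) :
    backMin x t (j - 1) = min (x (j - 1)) (backMin x t j) := by
  apply le_antisymm
  · apply le_min
    · exact backMin_le x t le_rfl (by omega)
    · apply Finset.le_inf'
      intro i hi
      simp only [Finset.mem_Icc] at hi
      exact backMin_le x t (by omega) hi.2
  · apply Finset.le_inf'
    intro i hi
    simp only [Finset.mem_Icc] at hi
    by_cases hij : i = j - 1
    · subst hij; exact min_le_left _ _
    · exact le_trans (min_le_right _ _) (backMin_le x t (by omega) hi.2)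

lemma key_step (x : ℕ → ℤ) (t : ℕ) (r : ℤ) (hx : IsPath t x) {j : ℕ}
    (h1 : 1 ≤ j) (h2 : j ≤ t) :
    (gm x t r j - gm x t r (j - 1) = 0) ∨
    (gm x t r j - gm x t r (j - 1) = 1 ∧ x j - x (j - 1) = 1) := by
  have hd := hx.2 j h1 h2
  simp only [Set.mem_insert_iff, Set.mem_singleton_iff] at hd
  have hrec := backMin_rec x t h1 h2
  have hKx : backMin x t j ≤ x j := backMin_le x t le_rfl h2
  simp only [gm, hrec]
  omega

lemma telescope_Icc (f : ℕ → ℤ) (t : ℕ) :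
    ∑ j ∈ Finset.Icc 1 t, (f j - f (j - 1)) = f t - f 0 := by
  induction t with
  | zero => simp
  | succ n ih =>
      rw [Finset.sum_Icc_succ_top (by omega), ih]
      have e : n + 1 - 1 = n := rfl
      rw [e]
      ring

lemma gm_sum (x : ℕ → ℤ) (t : ℕ) (r : ℤ) :
    ∑ j ∈ Finset.Icc 1 t, (gm x t r j - gm x t r (j - 1)) = gm x t r t - gm x t r 0 :=
  telescope_Icc (gm x t r) t

lemma card_E (x : ℕ → ℤ) (t : ℕ) (r : ℤ) (hx : IsPath t x)
    (hr1 : backMin x t 0 ≤ r) (hr2 : r ≤ x t) :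
    (((Finset.Icc 1 t).filter (fun j => gm x t r j - gm x t r (j - 1) = 1)).card : ℤ)
      = r - backMin x t 0 := by
  have hsum := gm_sum x t r
  have ht : gm x t r t = r := by simp [gm, backMin_t, min_eq_left hr2]
  have h0 : gm x t r 0 = backMin x t 0 := by simp [gm, min_eq_right hr1]
  rw [ht, h0] at hsum
  rw [← hsum, ← Finset.sum_filter_add_sum_filter_not (Finset.Icc 1 t)
      (fun j => gm x t r j - gm x t r (j - 1) = 1)]
  have hA : ∑ j ∈ (Finset.Icc 1 t).filter (fun j => gm x t r j - gm x t r (j - 1) = 1),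
      (gm x t r j - gm x t r (j - 1)) =
      (((Finset.Icc 1 t).filter (fun j => gm x t r j - gm x t r (j - 1) = 1)).card : ℤ) := by
    rw [Finset.sum_congr rfl (fun j hj => (Finset.mem_filter.mp hj).2)]
    simp
  have hB : ∑ j ∈ (Finset.Icc 1 t).filter (fun j => ¬(gm x t r j - gm x t r (j - 1) = 1)),
      (gm x t r j - gm x t r (j - 1)) = 0 := by
    apply Finset.sum_eq_zero
    intro j hj
    simp only [Finset.mem_filter, Finset.mem_Icc] at hj
    have hk := key_step x t r hx hj.1.1 hj.1.2
    omega
  rw [hA, hB, add_zero]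

/-- For `x ∈ C⟦0,t⟧`, `K = min_{0≤i≤t} x i` and `K ≤ r ≤ x t`, the path `s^r` is in `C⟦0,t⟧`,
has the same number of horizontal steps as `x`, `U(s^r) = r - K + D(x)` and
`D(s^r) = K - r + U(x)`. -/
theorem sr_is_path_and_counts (t : ℕ) (x : ℕ → ℤ) (hx : IsPath t x)
    (r : ℤ) (hr1 : backMin x t 0 ≤ r) (hr2 : r ≤ x t) :
    IsPath t (sr x t r) ∧
    Hc t (sr x t r) = Hc t x ∧
    (Uc t (sr x t r) : ℤ) = r - backMin x t 0 + Dc t x ∧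
    (Dc t (sr x t r) : ℤ) = backMin x t 0 - r + Uc t x := by
  have hstep : ∀ j : ℕ, 1 ≤ j → j ≤ t →
      sr x t r j - sr x t r (j - 1) =
        2 * (gm x t r j - gm x t r (j - 1)) - (x j - x (j - 1)) := by
    intro j _ _
    simp only [sr, gm]
    ring
  refine ⟨⟨?_, ?_⟩, ?_, ?_, ?_⟩
  · simp [sr, min_eq_right hr1, hx.1]
  · intro j h1 h2
    have hk := key_step x t r hx h1 h2
    have hd := hx.2 j h1 h2
    simp only [Set.mem_insert_iff, Set.mem_singleton_iff] at hd ⊢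
    have hs := hstep j h1 h2
    omega
  · unfold Hc
    congr 1
    apply Finset.filter_congr
    intro j hj
    simp only [Finset.mem_Icc] at hj
    have hk := key_step x t r hx hj.1 hj.2
    have hd := hx.2 j hj.1 hj.2
    simp only [Set.mem_insert_iff, Set.mem_singleton_iff] at hd
    have hs := hstep j hj.1 hj.2
    constructor <;> intro h <;> omega
  · have hfil : (Finset.Icc 1 t).filter (fun j => sr x t r j - sr x t r (j - 1) = 1)
        = (Finset.Icc 1 t).filter (fun j => x j - x (j - 1) = -1)
          ∪ (Finset.Icc 1 t).filter (fun j => gm x t r j - gm x t r (j - 1) = 1) := by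
      rw [← Finset.filter_or]
      apply Finset.filter_congr
      intro j hj
      simp only [Finset.mem_Icc] at hj
      have hk := key_step x t r hx hj.1 hj.2
      have hd := hx.2 j hj.1 hj.2
      simp only [Set.mem_insert_iff, Set.mem_singleton_iff] at hd
      have hs := hstep j hj.1 hj.2
      constructor <;> intro h <;> omega
    have hdisj : Disjoint ((Finset.Icc 1 t).filter (fun j => x j - x (j - 1) = -1))
        ((Finset.Icc 1 t).filter (fun j => gm x t r j - gm x t r (j - 1) = 1)) := by
      rw [Finset.disjoint_left]
      intro j hj1 hj2
      simp only [Finset.mem_filter, Finset.mem_Icc] at hj1 hj2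
      have hk := key_step x t r hx hj1.1.1 hj1.1.2
      omega
    have hDc : ((Finset.Icc 1 t).filter (fun j => x j - x (j - 1) = -1)).card = Dc t x := rfl
    have hE := card_E x t r hx hr1 hr2
    unfold Uc
    rw [hfil, Finset.card_union_of_disjoint hdisj]
    push_cast
    rw [hDc] at *
    linarith [hE]
  · have hfil : (Finset.Icc 1 t).filter (fun j => x j - x (j - 1) = 1)
        = (Finset.Icc 1 t).filter (fun j => sr x t r j - sr x t r (j - 1) = -1)
          ∪ (Finset.Icc 1 t).filter (fun j => gm x t r j - gm x t r (j - 1) = 1) := by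
      rw [← Finset.filter_or]
      apply Finset.filter_congr
      intro j hj
      simp only [Finset.mem_Icc] at hj
      have hk := key_step x t r hx hj.1 hj.2
      have hd := hx.2 j hj.1 hj.2
      simp only [Set.mem_insert_iff, Set.mem_singleton_iff] at hd
      have hs := hstep j hj.1 hj.2
      constructor <;> intro h <;> omega
    have hdisj : Disjoint ((Finset.Icc 1 t).filter (fun j => sr x t r j - sr x t r (j - 1) = -1))
        ((Finset.Icc 1 t).filter (fun j => gm x t r j - gm x t r (j - 1) = 1)) := by
      rw [Finset.disjoint_left]
      intro j hj1 hj2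
      simp only [Finset.mem_filter, Finset.mem_Icc] at hj1 hj2
      have hk := key_step x t r hx hj1.1.1 hj1.1.2
      have hs := hstep j hj1.1.1 hj1.1.2
      omega
    have hUc : ((Finset.Icc 1 t).filter (fun j => x j - x (j - 1) = 1)).card = Uc t x := rfl
    have hDc : ((Finset.Icc 1 t).filter (fun j => sr x t r j - sr x t r (j - 1) = -1)).card
        = Dc t (sr x t r) := rfl
    have hE := card_E x t r hx hr1 hr2
    have := congrArg (fun n : ℕ => (n : ℤ)) (hUc ▸ hfil ▸ rfl :
      Uc t x = ((Finset.Icc 1 t).filter (fun j => sr x t r j - sr x t r (j - 1) = -1)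
          ∪ (Finset.Icc 1 t).filter (fun j => gm x t r j - gm x t r (j - 1) = 1)).card)
    rw [Finset.card_union_of_disjoint hdisj] at this
    push_cast at this
    rw [hDc] at this
    linarith [hE]
end

section
/- Let G, G̃ be independent geometric random variables with parameters p₁ = ρ₀ρ and p₂ = ρ₀/ρ respectively, where 0 ≤ p₁, p₂ < 1 and p₁ ≠ p₂ (i.e., ρ ≠ 1). Then for all 0 ≤ n ≤ m, P(G = n | G + G̃ = m) = ρ^{2n} / [m+1]_{ρ²}, and the law of G + G̃ is the q-negative binomial law P(G + G̃ = m) = [m+1]_q θ^m (1-θ)(1-θq) with q = ρ² and θ = ρ₀/ρ. -/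
/-- The `q`-integer `[n]_q = 1 + q + ... + q^{n-1}`. -/
noncomputable def qint (q : ℝ) (n : ℕ) : ℝ := ∑ i ∈ Finset.range n, q ^ i

/-- Geometric pmf with parameter `p`: mass `(1-p)p^n` at `n`. -/
noncomputable def geo (p : ℝ) (n : ℕ) : ℝ := (1 - p) * p ^ n

/-- `G ~ geo(ρ₀ρ)`, `G̃ ~ geo(ρ₀/ρ)` independent, with both parameters in `[0,1)` and
distinct (`ρ ≠ 1`).  Then `G + G̃` is `q`-negative binomial with `q = ρ²`, `θ = ρ₀/ρ`:
`P(G+G̃ = m) = [m+1]_q θ^m (1-θ)(1-θq)`, and conditionally on `G + G̃ = m`,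
`P(G = n | G+G̃ = m) = ρ^{2n}/[m+1]_{ρ²}` for `0 ≤ n ≤ m`. -/
theorem geo_sum_q_negative_binomial (ρ₀ ρ : ℝ) (hρ : 0 < ρ)
    (h₁0 : 0 ≤ ρ₀ * ρ) (h₁1 : ρ₀ * ρ < 1)
    (h₂0 : 0 ≤ ρ₀ / ρ) (h₂1 : ρ₀ / ρ < 1)
    (hne : ρ₀ * ρ ≠ ρ₀ / ρ) :
    (∀ m : ℕ,
      (∑ n ∈ Finset.range (m + 1), geo (ρ₀ * ρ) n * geo (ρ₀ / ρ) (m - n))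
        = qint (ρ ^ 2) (m + 1) * (ρ₀ / ρ) ^ m * (1 - ρ₀ / ρ) * (1 - (ρ₀ / ρ) * ρ ^ 2)) ∧
    (∀ m n : ℕ, n ≤ m →
      geo (ρ₀ * ρ) n * geo (ρ₀ / ρ) (m - n)
        = (ρ ^ (2 * n) / qint (ρ ^ 2) (m + 1)) *
            ∑ i ∈ Finset.range (m + 1), geo (ρ₀ * ρ) i * geo (ρ₀ / ρ) (m - i)) := by
  have hρ0 : ρ ≠ 0 := ne_of_gt hρ
  have hθq : ρ₀ * ρ = (ρ₀ / ρ) * ρ ^ 2 := by field_simp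
  have key : ∀ m n : ℕ, n ≤ m →
      geo (ρ₀ * ρ) n * geo (ρ₀ / ρ) (m - n)
        = ((1 - ρ₀ / ρ) * (1 - (ρ₀ / ρ) * ρ ^ 2)) * (ρ₀ / ρ) ^ m * (ρ ^ 2) ^ n := by
    intro m n hn
    have hm : m = n + (m - n) := (Nat.add_sub_cancel' hn).symm
    have hpow : (ρ₀ * ρ) ^ n * (ρ₀ / ρ) ^ (m - n) = (ρ₀ / ρ) ^ m * (ρ ^ 2) ^ n := by
      rw [hm, pow_add, hθq, mul_pow]
      simp only [Nat.add_sub_cancel_left]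
      ring
    simp only [geo, hθq]
    calc (1 - ρ₀ / ρ * ρ ^ 2) * (ρ₀ / ρ * ρ ^ 2) ^ n * ((1 - ρ₀ / ρ) * (ρ₀ / ρ) ^ (m - n))
        = (1 - ρ₀ / ρ * ρ ^ 2) * (1 - ρ₀ / ρ) * ((ρ₀ * ρ) ^ n * (ρ₀ / ρ) ^ (m - n)) := by
          rw [← hθq]; ring
      _ = _ := by rw [hpow]; ring
  have hsum : ∀ m : ℕ,
      (∑ n ∈ Finset.range (m + 1), geo (ρ₀ * ρ) n * geo (ρ₀ / ρ) (m - n))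
        = qint (ρ ^ 2) (m + 1) * (ρ₀ / ρ) ^ m * (1 - ρ₀ / ρ) * (1 - (ρ₀ / ρ) * ρ ^ 2) := by
    intro m
    rw [Finset.sum_congr rfl (fun n hn => key m n (Nat.lt_succ_iff.mp (Finset.mem_range.mp hn)))]
    rw [qint, ← Finset.mul_sum]
    ring
  refine ⟨hsum, fun m n hn => ?_⟩
  have hqpos : 0 < qint (ρ ^ 2) (m + 1) := by
    apply Finset.sum_pos
    · intro i _; positivity
    · exact ⟨0, Finset.mem_range.mpr (Nat.succ_pos m)⟩
  rw [hsum m, key m n hn, pow_mul]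
  field_simp
end

section
/- Fix q > 0, q ≠ 1 and a probability mass function p on ℕ. Define P(G = j) = q^j ∑_{m=j}^∞ p(m)/[m+1]_q. Then for every integer K ≤ 0 and integer x ≥ K: P(G ≥ -K) + P(G = -K)·(1 - q^{K - x})/(q - 1) = ∑_{m=-K}^∞ p(m) · (q^{m+1} - q^{-x})/(q^{m+1} - 1). -/
/-- The marginal law of `G`: `P(G = j) = q^j ∑_{m ≥ j} p m/[m+1]_q`. -/
noncomputable def Glaw (q : ℝ) (p : ℕ → ℝ) (j : ℕ) : ℝ :=
  q ^ j * ∑' m : ℕ, if j ≤ m then p m / qint q (m + 1) else 0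

open Finset

section
variable {q : ℝ} {p : ℕ → ℝ}

lemma one_le_qint_succ (hq : 0 ≤ q) (m : ℕ) : 1 ≤ qint q (m + 1) := by
  rw [qint, sum_range_succ', pow_zero]
  exact le_add_of_nonneg_left (sum_nonneg fun i _ => pow_nonneg hq _)

lemma qint_succ_pos (hq : 0 ≤ q) (m : ℕ) : 0 < qint q (m + 1) :=
  one_pos.trans_le (one_le_qint_succ hq m)

lemma qint_eq_div (hq1 : q ≠ 1) (n : ℕ) : qint q n = (q ^ n - 1) / (q - 1) :=
  geom_sum_eq hq1 n

theorem tsum_mul_tsum_tail_eq {w a : ℕ → ℝ} (hw : ∀ j, 0 ≤ w j) (ha : ∀ m, 0 ≤ a m)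
    (hs : Summable fun m => (∑ j ∈ range (m + 1), w j) * a m) :
    ∑' j, w j * ∑' m, (if j ≤ m then a m else 0)
      = ∑' m, (∑ j ∈ range (m + 1), w j) * a m := by
  set F : ℕ → ℕ → ℝ := fun m j => if j ≤ m then w j * a m else 0
  have hF_nonneg : 0 ≤ Function.uncurry F := fun u => by
    simp only [Function.uncurry, F]
    split_ifs
    exacts [mul_nonneg (hw _) (ha _), le_rfl]
  have hrow : ∀ m, ∑' j, F m j = (∑ j ∈ range (m + 1), w j) * a m := fun m => by
    rw [tsum_eq_sum (s := range (m + 1)) fun j hj => if_neg (by simpa [Nat.lt_succ_iff] using hj),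
      sum_mul]
    exact sum_congr rfl fun j hj => if_pos (Nat.lt_succ_iff.mp (mem_range.mp hj))
  have hcol : ∀ j, w j * ∑' m, (if j ≤ m then a m else 0) = ∑' m, F m j := fun j => by
    simp only [← tsum_mul_left, mul_ite, mul_zero, F]
  have hF : Summable (Function.uncurry F) :=
    (summable_prod_of_nonneg hF_nonneg).2
      ⟨fun m => summable_of_ne_finset_zero (s := range (m + 1)) fun j hj =>
        if_neg (by simpa [Nat.lt_succ_iff] using hj),
        by simpa only [Function.uncurry_apply_pair, hrow] using hs⟩
  simp only [hcol, hF.tsum_comm, hrow]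

lemma sum_range_succ_ite_pow (hq1 : q ≠ 1) (k m : ℕ) :
    ∑ j ∈ range (m + 1), (if k ≤ j then q ^ j else 0)
      = if k ≤ m then (q ^ (m + 1) - q ^ k) / (q - 1) else 0 := by
  rw [← sum_filter]
  split_ifs with hkm
  · rw [← geom_sum_Ico hq1 (by omega)]
    congr 1
    ext j
    simp only [mem_filter, mem_range, mem_Ico]
    omega
  · exact sum_eq_zero fun j hj => by simp only [mem_filter, mem_range] at hj; omega

lemma summable_div_qint (hq : 0 ≤ q) (hp0 : ∀ n, 0 ≤ p n) (hp : Summable p) :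
    Summable fun m => p m / qint q (m + 1) :=
  hp.of_nonneg_of_le (fun m => div_nonneg (hp0 m) (qint_succ_pos hq m).le)
    fun m => div_le_self (hp0 m) (one_le_qint_succ hq m)

lemma summable_sum_range_mul_div_qint (hq : 0 ≤ q) (hp0 : ∀ n, 0 ≤ p n) (hp : Summable p)
    {w : ℕ → ℝ} (hw0 : ∀ j, 0 ≤ w j) (hw : ∀ j, w j ≤ q ^ j) :
    Summable fun m => (∑ j ∈ range (m + 1), w j) * (p m / qint q (m + 1)) := by
  have ha : ∀ m, 0 ≤ p m / qint q (m + 1) := fun m => div_nonneg (hp0 m) (qint_succ_pos hq m).le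
  refine hp.of_nonneg_of_le (fun m => mul_nonneg (sum_nonneg fun j _ => hw0 j) (ha m))
    fun m => ?_
  calc (∑ j ∈ range (m + 1), w j) * (p m / qint q (m + 1))
      ≤ qint q (m + 1) * (p m / qint q (m + 1)) :=
        mul_le_mul_of_nonneg_right (sum_le_sum fun j _ => hw j) (ha m)
    _ = p m := mul_div_cancel₀ _ (qint_succ_pos hq m).ne'

theorem tsum_Glaw_Ici_add (hq0 : 0 ≤ q) (hq1 : q ≠ 1) (hp0 : ∀ n, 0 ≤ p n) (hp : Summable p)
    (k : ℕ) (c : ℝ) :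
    (∑' j : ℕ, if k ≤ j then Glaw q p j else 0) + Glaw q p k * c / (q - 1)
      = ∑' m : ℕ, if k ≤ m then p m * (q ^ (m + 1) - q ^ k + q ^ k * c) / (q ^ (m + 1) - 1)
          else 0 := by
  set w : ℕ → ℝ := fun j => if k ≤ j then q ^ j else 0
  set C := q ^ k * c / (q - 1)
  have hw0 : ∀ j, 0 ≤ w j := fun j => by simp only [w]; split_ifs <;> positivity
  have hw : ∀ j, w j ≤ q ^ j := fun j => by
    simp only [w]; split_ifs
    exacts [le_rfl, by positivity]
  have hs := summable_sum_range_mul_div_qint hq0 hp0 hp hw0 hw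
  have htail : (∑' j : ℕ, if k ≤ j then Glaw q p j else 0)
      = ∑' m, (∑ j ∈ range (m + 1), w j) * (p m / qint q (m + 1)) := by
    rw [← tsum_mul_tsum_tail_eq hw0 (fun m => div_nonneg (hp0 m) (qint_succ_pos hq0 m).le) hs]
    exact tsum_congr fun j => by simp only [w, Glaw, ite_mul, zero_mul]
  have hcorr : Glaw q p k * c / (q - 1)
      = ∑' m, (if k ≤ m then C else 0) * (p m / qint q (m + 1)) := by
    calc Glaw q p k * c / (q - 1)
        = C * ∑' m, (if k ≤ m then p m / qint q (m + 1) else 0) := by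
          simp only [Glaw, C]
          ring
      _ = _ := by
          rw [← tsum_mul_left]
          exact tsum_congr fun m => by split_ifs <;> simp
  have hcorr_sum : Summable fun m => (if k ≤ m then C else 0) * (p m / qint q (m + 1)) := by
    refine ((summable_div_qint hq0 hp0 hp).mul_left C).indicator {m | k ≤ m} |>.congr fun m => ?_
    simp only [Set.indicator_apply, Set.mem_ofPred_eq, ite_mul, zero_mul]
  rw [htail, hcorr, ← hs.tsum_add hcorr_sum]
  refine tsum_congr fun m => ?_
  rw [sum_range_succ_ite_pow hq1]
  have hpow : q ^ (m + 1) - 1 ≠ 0 :=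
    sub_ne_zero.mpr fun h => hq1 ((pow_eq_one_iff_of_nonneg hq0 m.succ_ne_zero).mp h)
  have hq1' : q - 1 ≠ 0 := sub_ne_zero.mpr hq1
  split_ifs
  · simp only [C, qint_eq_div hq1]
    field_simp
  · simp

end

theorem Glaw_pitman_identity_general (q : ℝ) (hq0 : 0 < q) (hq1 : q ≠ 1)
    (p : ℕ → ℝ) (hp0 : ∀ n, 0 ≤ p n) (hp1 : HasSum p 1)
    (K : ℤ) (hK : K ≤ 0) (x : ℤ) :
    (∑' j : ℕ, if -K ≤ (j : ℤ) then Glaw q p j else 0)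
      + Glaw q p (-K).toNat * (1 - q ^ (K - x)) / (q - 1)
      = ∑' m : ℕ,
          if -K ≤ (m : ℤ) then p m * (q ^ (m + 1) - q ^ (-x)) / (q ^ (m + 1) - 1)
          else 0 := by
  obtain ⟨k, rfl⟩ : ∃ k : ℕ, K = -k := ⟨(-K).toNat, by omega⟩
  have hpow : q ^ k * q ^ (-(k : ℤ) - x) = q ^ (-x) := by
    rw [← zpow_natCast, ← zpow_add₀ hq0.ne']
    congr 1
    ring
  simp only [neg_neg, Int.toNat_natCast, Nat.cast_le]
  rw [tsum_Glaw_Ici_add hq0.le hq1 hp0 hp1.summable]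
  simp only [mul_one_sub, hpow, sub_add_sub_cancel]

/-- Fix `q > 0`, `q ≠ 1`, a pmf `p` on `ℕ`, and let `G` have law
`P(G = j) = q^j ∑_{m ≥ j} p m/[m+1]_q`.  Then for every integer `K ≤ 0` and `x ≥ K`:
`P(G ≥ -K) + P(G = -K)(1 - q^{K-x})/(q-1) = ∑_{m ≥ -K} p m (q^{m+1} - q^{-x})/(q^{m+1}-1)`. -/
theorem Glaw_pitman_identity (q : ℝ) (hq0 : 0 < q) (hq1 : q ≠ 1)
    (p : ℕ → ℝ) (hp0 : ∀ n, 0 ≤ p n) (hp1 : HasSum p 1)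
    (K : ℤ) (hK : K ≤ 0) (x : ℤ) (hx : K ≤ x) :
    (∑' j : ℕ, if -K ≤ (j : ℤ) then Glaw q p j else 0)
      + Glaw q p (-K).toNat * (1 - q ^ (K - x)) / (q - 1)
      = ∑' m : ℕ,
          if -K ≤ (m : ℤ) then p m * (q ^ (m + 1) - q ^ (-x)) / (q ^ (m + 1) - 1)
          else 0 :=
  Glaw_pitman_identity_general q hq0 hq1 p hp0 hp1 K hK x
end

section
/- Let X₀ ~ 1 + Poisson(1), i.e., P(X₀ = n) = e^{-1}/(n-1)! for n ≥ 1 and P(X₀ = 0) = 0. Define G by the uniform thinning P(G = m | X₀ = n) = 1/(n+1) for 0 ≤ m ≤ n. Then G ~ Poisson(1): P(G = m) = e^{-1}/m! for all m ∈ ℕ. Equivalently, e^{-1} ∑_{n=m}^∞ 1/((n-1)!·(n+1)) = e^{-1}/m! for each m ≥ 1. -/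
/-!
Since `n / (n + 1)! = 1 / n! - 1 / (n + 1)!`, the series `∑_{n ≥ m} n / (n + 1)!` telescopes to
`1 / m!`. For `n ≥ 1` its terms are `1 / ((n - 1)! (n + 1))`, and at `n = 0` both this term and
`P(X₀ = 0)` vanish, so `P(G = m) = ∑_{n ≥ m} P(X₀ = n) / (n + 1) = e⁻¹ / m!` for every `m`.
-/

open Filter Topology

/-- The law of `X₀ ~ 1 + Poisson(1)`: mass `e^{-1}/(n-1)!` at `n ≥ 1`, mass `0` at `0`. -/
noncomputable def pShiftedPoisson (n : ℕ) : ℝ :=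
  if n = 0 then 0 else Real.exp (-1) / (Nat.factorial (n - 1))

lemma hasSum_sub_succ_of_antitone {f : ℕ → ℝ} (hf : Antitone f)
    (hf0 : Tendsto f atTop (𝓝 0)) : HasSum (fun n => f n - f (n + 1)) (f 0) := by
  rw [hasSum_iff_tendsto_nat_of_nonneg fun n => sub_nonneg.2 (hf n.le_succ)]
  simp_rw [Finset.sum_range_sub']
  simpa using tendsto_const_nhds.sub hf0

lemma hasSum_ite_le_sub_succ_of_antitone {f : ℕ → ℝ} (hf : Antitone f)
    (hf0 : Tendsto f atTop (𝓝 0)) (m : ℕ) :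
    HasSum (fun n => if m ≤ n then f n - f (n + 1) else 0) (f m) := by
  have hshift : HasSum (fun k => f (k + m) - f (k + m + 1)) (f m) := by
    simpa [add_right_comm] using hasSum_sub_succ_of_antitone (f := fun k => f (k + m))
      (fun a b hab => hf (by omega)) (hf0.comp (tendsto_add_atTop_nat m))
  rw [← (add_left_injective m).hasSum_iff]
  · simpa [Function.comp_def] using hshift
  · intro n hn
    rw [if_neg]
    exact fun hmn => hn ⟨n - m, Nat.sub_add_cancel hmn⟩

lemma one_div_factorial_sub_one_div_factorial_succ (n : ℕ) :
    (1 / n.factorial - 1 / (n + 1).factorial : ℝ) = n / (n + 1).factorial := by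
  rw [Nat.factorial_succ]
  push_cast
  field_simp
  ring

lemma hasSum_ite_le_div_factorial_succ (m : ℕ) :
    HasSum (fun n : ℕ => if m ≤ n then (n : ℝ) / (n + 1).factorial else 0)
      (1 / m.factorial) := by
  have hanti : Antitone fun n : ℕ => (1 / n.factorial : ℝ) := fun a b hab =>
    one_div_le_one_div_of_le (mod_cast a.factorial_pos) (mod_cast Nat.factorial_le hab)
  have hlim : Tendsto (fun n : ℕ => (1 / n.factorial : ℝ)) atTop (𝓝 0) := by
    simp only [one_div]
    exact tendsto_inv_atTop_zero.comp
      (tendsto_natCast_atTop_atTop.comp factorial_tendsto_atTop)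
  simpa only [one_div_factorial_sub_one_div_factorial_succ]
    using hasSum_ite_le_sub_succ_of_antitone hanti hlim m

lemma div_factorial_succ_eq_one_div_factorial_pred_mul {n : ℕ} (hn : n ≠ 0) :
    (n : ℝ) / (n + 1).factorial = 1 / ((n - 1).factorial * ((n : ℝ) + 1)) := by
  obtain ⟨k, rfl⟩ := Nat.exists_eq_succ_of_ne_zero hn
  rw [Nat.factorial_succ, Nat.factorial_succ]
  push_cast
  field_simp

lemma pShiftedPoisson_div_succ (n : ℕ) :
    pShiftedPoisson n / ((n : ℝ) + 1) = Real.exp (-1) * (n / (n + 1).factorial) := by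
  rcases eq_or_ne n 0 with rfl | hn
  · simp [pShiftedPoisson]
  · rw [div_factorial_succ_eq_one_div_factorial_pred_mul hn, pShiftedPoisson, if_neg hn,
      div_div, mul_one_div]

/-- If `X₀ ~ 1 + Poisson(1)` and `P(G = m | X₀ = n) = 1/(n+1)` for `0 ≤ m ≤ n`, then
`G ~ Poisson(1)`: for every `m`, `∑_{n ≥ m} P(X₀ = n)/(n+1) = e^{-1}/m!`.
Equivalently, `e^{-1} ∑_{n ≥ m} 1/((n-1)!(n+1)) = e^{-1}/m!` for each `m ≥ 1`. -/
theorem shifted_poisson_uniform_thinning :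
    (∀ m : ℕ,
      (∑' n : ℕ, if m ≤ n then pShiftedPoisson n / ((n : ℝ) + 1) else 0)
        = Real.exp (-1) / Nat.factorial m) ∧
    (∀ m : ℕ, 1 ≤ m →
      Real.exp (-1) *
          (∑' n : ℕ, if m ≤ n then 1 / ((Nat.factorial (n - 1) : ℝ) * ((n : ℝ) + 1)) else 0)
        = Real.exp (-1) / Nat.factorial m) := by
  refine ⟨fun m => ?_, fun m hm => ?_⟩
  · rw [← mul_one_div, ← ((hasSum_ite_le_div_factorial_succ m).mul_left _).tsum_eq]
    simp only [pShiftedPoisson_div_succ, mul_ite, mul_zero]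
  · rw [← mul_one_div, ← (hasSum_ite_le_div_factorial_succ m).tsum_eq]
    congr 1
    refine tsum_congr fun n => ?_
    split_ifs with hmn
    · exact (div_factorial_succ_eq_one_div_factorial_pred_mul (by omega)).symm
    · rfl
end

section
/- Define p(i,j) = e^{-1} (i+j)/(i+j+1)! for i, j ∈ ℕ. Then p is a probability mass function on ℕ × ℕ (its total sum is 1), both marginals are Poisson(1) (∑_j p(i,j) = e^{-1}/i! for each i), and the law of the sum is shifted Poisson: P(i+j = m) = e^{-1} (m+1)·m/(m+1)! = e^{-1} m/m! for m ≥ 1, i.e., the sum is distributed as 1 + Poisson(1), and conditionally on the sum the pair is uniform. -/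
/-- The bivariate mass function `p(i,j) = e^{-1}(i+j)/(i+j+1)!`. -/
noncomputable def pBiv (i j : ℕ) : ℝ :=
  Real.exp (-1) * (i + j) / (Nat.factorial (i + j + 1))

private lemma pBiv_nonneg (i j : ℕ) : 0 ≤ pBiv i j := by
  unfold pBiv
  positivity

private lemma pBiv_eq_sub (i j : ℕ) :
    pBiv i j = Real.exp (-1) / Nat.factorial (i + j)
      - Real.exp (-1) / Nat.factorial (i + j + 1) := by
  unfold pBiv
  have h1 : (Nat.factorial (i + j) : ℝ) ≠ 0 := by positivity
  have h2 : (Nat.factorial (i + j + 1) : ℝ) ≠ 0 := by positivity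
  have key : (Nat.factorial (i + j + 1) : ℝ) = (i + j + 1) * Nat.factorial (i + j) := by
    rw [Nat.factorial_succ]; push_cast; ring
  rw [key]
  field_simp
  ring

private lemma row_hasSum (i : ℕ) :
    HasSum (fun j => pBiv i j) (Real.exp (-1) / Nat.factorial i) := by
  rw [hasSum_iff_tendsto_nat_of_nonneg (fun j => pBiv_nonneg i j)]
  have heq : ∀ n : ℕ, (∑ j ∈ Finset.range n, pBiv i j)
      = Real.exp (-1) / Nat.factorial i - Real.exp (-1) / Nat.factorial (i + n) := by
    intro n
    rw [Finset.sum_congr rfl (fun j _ => pBiv_eq_sub i j)]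
    have := Finset.sum_range_sub' (fun j => Real.exp (-1) / Nat.factorial (i + j)) n
    simp only [Nat.add_zero, ← Nat.add_assoc] at this
    rw [this]
  simp only [heq]
  have h0 : Filter.Tendsto (fun n : ℕ => Real.exp (-1) / Nat.factorial (i + n))
      Filter.atTop (nhds 0) := by
    have h1 : Filter.Tendsto (fun n : ℕ => Real.exp (-1) / Nat.factorial n)
        Filter.atTop (nhds 0) := by
      have := FloorSemiring.tendsto_pow_div_factorial_atTop (1 : ℝ)
      simp only [one_pow] at this
      have := this.const_mul (Real.exp (-1))
      simpa [div_eq_mul_inv, mul_comm] using this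
    exact h1.comp ((Filter.tendsto_add_atTop_nat i).congr (fun n => Nat.add_comm n i))
  simpa using (tendsto_const_nhds.sub h0)

private lemma exp_inv_hasSum :
    HasSum (fun n : ℕ => Real.exp (-1) / Nat.factorial n) 1 := by
  have h := NormedSpace.exp_series_hasSum_exp' (𝕂 := ℝ) (1 : ℝ)
  simp only [one_pow, smul_eq_mul, mul_one] at h
  have h2 : HasSum (fun n : ℕ => ((Nat.factorial n : ℝ))⁻¹) (Real.exp 1) := by
    rw [Real.exp_eq_exp_ℝ]; exact h
  have h3 := h2.mul_left (Real.exp (-1))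
  have : Real.exp (-1) * Real.exp 1 = 1 := by
    rw [← Real.exp_add]; norm_num
  rw [this] at h3
  simpa [div_eq_mul_inv] using h3

private lemma pBiv_symm (i j : ℕ) : pBiv i j = pBiv j i := by
  unfold pBiv; rw [add_comm (i:ℝ) (j:ℝ), Nat.add_comm i j]

private lemma pBiv_summable : Summable (fun ij : ℕ × ℕ => pBiv ij.1 ij.2) := by
  have hb : Summable (fun ij : ℕ × ℕ =>
      (Real.exp (-1) / Nat.factorial ij.1) * (1 / Nat.factorial ij.2)) := by
    apply Summable.mul_of_nonneg (f := fun i : ℕ => Real.exp (-1) / Nat.factorial i)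
      (g := fun j : ℕ => 1 / (Nat.factorial j : ℝ))
    · exact exp_inv_hasSum.summable
    · have := (exp_inv_hasSum.summable).mul_left (Real.exp 1)
      have he : ∀ n : ℕ, Real.exp 1 * (Real.exp (-1) / Nat.factorial n)
          = 1 / Nat.factorial n := by
        intro n
        rw [← mul_div_assoc, ← Real.exp_add]; norm_num
      simpa [he] using this
    · intro i; positivity
    · intro j; positivity
  apply Summable.of_nonneg_of_le (fun ij => pBiv_nonneg ij.1 ij.2) _ hb
  rintro ⟨i, j⟩
  simp only
  have hdvd : (Nat.factorial i * Nat.factorial j : ℕ) ∣ Nat.factorial (i + j) :=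
    Nat.factorial_mul_factorial_dvd_factorial_add i j
  have hle : (Nat.factorial i * Nat.factorial j : ℝ) ≤ Nat.factorial (i + j) := by
    exact_mod_cast Nat.le_of_dvd (Nat.factorial_pos _) hdvd
  calc pBiv i j ≤ Real.exp (-1) / Nat.factorial (i + j) := by
        rw [pBiv_eq_sub]
        have : 0 ≤ Real.exp (-1) / Nat.factorial (i + j + 1) := by positivity
        linarith
    _ ≤ Real.exp (-1) / (Nat.factorial i * Nat.factorial j) := by
        apply div_le_div_of_nonneg_left (Real.exp_pos _).le _ hle
        positivity
    _ = (Real.exp (-1) / Nat.factorial i) * (1 / Nat.factorial j) := by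
        field_simp

/-- `p(i,j) = e^{-1}(i+j)/(i+j+1)!` is a pmf on `ℕ × ℕ` with Poisson(1) marginals,
the sum `i + j` is distributed as `1 + Poisson(1)`, and `p` depends on `(i,j)` only through
`i + j` (uniform conditional law given the sum). -/
theorem pBiv_properties :
    HasSum (fun ij : ℕ × ℕ => pBiv ij.1 ij.2) 1 ∧
    (∀ i : ℕ, (∑' j : ℕ, pBiv i j) = Real.exp (-1) / Nat.factorial i) ∧
    (∀ j : ℕ, (∑' i : ℕ, pBiv i j) = Real.exp (-1) / Nat.factorial j) ∧
    (∀ m : ℕ, 1 ≤ m →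
      (∑ i ∈ Finset.range (m + 1), pBiv i (m - i))
        = Real.exp (-1) / Nat.factorial (m - 1)) ∧
    (∀ i j i' j' : ℕ, i + j = i' + j' → pBiv i j = pBiv i' j') := by
  refine ⟨?_, ?_, ?_, ?_, ?_⟩
  · obtain ⟨a, ha⟩ := pBiv_summable
    have hg : HasSum (fun i : ℕ => Real.exp (-1) / Nat.factorial i) a :=
      ha.prod_fiberwise (fun i => row_hasSum i)
    rwa [hg.unique exp_inv_hasSum] at ha
  · intro i; exact (row_hasSum i).tsum_eq
  · intro j
    have : (fun i : ℕ => pBiv i j) = fun i => pBiv j i := by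
      funext i; exact pBiv_symm i j
    rw [this]; exact (row_hasSum j).tsum_eq
  · intro m hm
    have hterm : ∀ i ∈ Finset.range (m + 1),
        pBiv i (m - i) = Real.exp (-1) * m / Nat.factorial (m + 1) := by
      intro i hi
      rw [Finset.mem_range] at hi
      have : i + (m - i) = m := Nat.add_sub_cancel' (Nat.lt_succ_iff.mp hi)
      have hc : (i:ℝ) + (m - i : ℕ) = m := by exact_mod_cast this
      unfold pBiv
      rw [this, hc]
    rw [Finset.sum_congr rfl hterm, Finset.sum_const, Finset.card_range, nsmul_eq_mul]
    have hfac : (Nat.factorial (m + 1) : ℝ)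
        = (m + 1) * m * Nat.factorial (m - 1) := by
      have h1 : Nat.factorial (m + 1) = (m + 1) * Nat.factorial m := Nat.factorial_succ m
      have h2 : Nat.factorial m = m * Nat.factorial (m - 1) := by
        cases m with
        | zero => omega
        | succ k => simp [Nat.factorial_succ]
      rw [h1, h2]; push_cast; ring
    have hm1 : (0:ℝ) < m := by exact_mod_cast hm
    have hfne : (Nat.factorial (m - 1) : ℝ) ≠ 0 := by positivity
    rw [hfac]
    field_simp
    push_cast
    ring
  · intro i j i' j' h
    unfold pBiv
    rw [show ((i:ℝ) + j) = ((i':ℝ) + j') by exact_mod_cast h, h]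
end

section
/- (Damage-model characterization) Let N be an ℕ-valued random variable, q > 0, and define the conditional survival law s(r|n) = q^r/[n+1]_q on {0,...,n}. Let R, D = N - R be the surviving and damaged parts. Assume θ := 1 - P(D = 0) ∈ (0,1) and qθ ∈ (0,1). If the Rao–Rubin condition P(R = r | D = 0) = P(R = r) holds for all r, then P(N = r) = [r+1]_q θ^r (1-θ)(1-θq) for all r ∈ ℕ, i.e., N is q-negative binomial. In particular the mass function satisfies the recursion P(N = r)/[r+1]_q = θ · P(N = r-1)/[r]_q for r ≥ 1. -/
/-- Damage-model characterization.  Let `N` have pmf `pN` on `ℕ` and survival law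
`s(r|n) = q^r/[n+1]_q` on `{0,...,n}`, so that `P(R = r, N = n) = (q^r/[n+1]_q) pN n`.
With `θ = 1 - P(D = 0)` where `D = N - R`, assume `θ ∈ (0,1)`, `qθ ∈ (0,1)` and the
Rao–Rubin condition `P(R = r, D = 0) = P(D = 0) P(R = r)` for all `r`.  Then
`pN r = [r+1]_q θ^r (1-θ)(1-θq)` for all `r`; in particular
`pN r/[r+1]_q = θ · pN (r-1)/[r]_q` for `r ≥ 1`. -/
theorem damage_model_characterization (q : ℝ) (hq : 0 < q)
    (pN : ℕ → ℝ) (hpN0 : ∀ n, 0 ≤ pN n) (hpN1 : HasSum pN 1)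
    (θ : ℝ)
    (hθdef : θ = 1 - ∑' n : ℕ, q ^ n / qint q (n + 1) * pN n)
    (hθ0 : 0 < θ) (hθ1 : θ < 1) (hqθ0 : 0 < q * θ) (hqθ1 : q * θ < 1)
    (hRR : ∀ r : ℕ,
      q ^ r / qint q (r + 1) * pN r
        = (1 - θ) * ∑' n : ℕ, if r ≤ n then q ^ r / qint q (n + 1) * pN n else 0) :
    (∀ r : ℕ, pN r = qint q (r + 1) * θ ^ r * (1 - θ) * (1 - θ * q)) ∧
    (∀ r : ℕ, 1 ≤ r → pN r / qint q (r + 1) = θ * (pN (r - 1) / qint q r)) := by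
  have hqpos : ∀ n : ℕ, 0 < qint q (n + 1) := by
    intro n
    apply Finset.sum_pos
    · intro i _; positivity
    · exact ⟨0, Finset.mem_range.mpr (Nat.succ_pos n)⟩
  have hq1 : ∀ n : ℕ, 1 ≤ qint q (n + 1) := by
    intro n
    calc (1:ℝ) = q ^ 0 := by simp
    _ ≤ ∑ i ∈ Finset.range (n+1), q ^ i :=
        Finset.single_le_sum (f := fun i => q ^ i) (fun i _ => by positivity)
          (Finset.mem_range.mpr (Nat.succ_pos n))
  set a : ℕ → ℝ := fun n => pN n / qint q (n + 1) with ha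
  have ha0 : ∀ n, 0 ≤ a n := fun n => div_nonneg (hpN0 n) (hqpos n).le
  have hale : ∀ n, a n ≤ pN n := fun n => div_le_self (hpN0 n) (hq1 n)
  have hsum : Summable a := Summable.of_nonneg_of_le ha0 hale hpN1.summable
  have hS : ∀ r : ℕ, Summable (fun n => if r ≤ n then a n else 0) := by
    intro r
    apply Summable.of_nonneg_of_le _ _ hsum
    · intro n; split
      · exact ha0 n
      · exact le_rfl
    · intro n; split
      · exact le_rfl
      · exact ha0 n
  set T : ℕ → ℝ := fun r => ∑' n, if r ≤ n then a n else 0 with hT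
  have key : ∀ r, a r = (1 - θ) * T r := by
    intro r
    have h := hRR r
    have hql : (0:ℝ) < q ^ r := by positivity
    have h1 : q ^ r / qint q (r + 1) * pN r = q ^ r * a r := by
      rw [div_mul_eq_mul_div, mul_div_assoc]
    have h2 : (∑' n : ℕ, if r ≤ n then q ^ r / qint q (n + 1) * pN n else 0)
        = q ^ r * T r := by
      rw [hT, ← tsum_mul_left]
      congr 1; funext n
      rw [mul_ite, mul_zero, div_mul_eq_mul_div, mul_div_assoc]
    rw [h1, h2] at h
    have h3 : q ^ r * a r = q ^ r * ((1 - θ) * T r) := by rw [h]; ring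
    exact mul_left_cancel₀ hql.ne' h3
  have tdiff : ∀ r, T r - T (r + 1) = a r := by
    intro r
    rw [hT]
    simp only
    rw [← Summable.tsum_sub (hS r) (hS (r + 1))]
    have heq : (fun n => (if r ≤ n then a n else 0) - (if r + 1 ≤ n then a n else 0))
        = fun n => if n = r then a n else 0 := by
      funext n
      rcases lt_trichotomy n r with h | h | h
      · rw [if_neg (by omega), if_neg (by omega), if_neg (by omega)]; ring
      · subst h; rw [if_pos le_rfl, if_neg (by omega), if_pos rfl]; ring
      · rw [if_pos (by omega), if_pos (by omega), if_neg (by omega)]; ring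
    rw [heq, tsum_eq_single r (fun b hb => if_neg hb)]
    simp
  have hrec : ∀ r, a (r + 1) = θ * a r := by
    intro r
    have hT1 : T (r + 1) = T r - a r := by linarith [tdiff r]
    calc a (r + 1) = (1 - θ) * T (r + 1) := key (r + 1)
    _ = (1 - θ) * T r - (1 - θ) * a r := by rw [hT1]; ring
    _ = a r - (1 - θ) * a r := by rw [← key r]
    _ = θ * a r := by ring
  have hgeom : ∀ r, a r = θ ^ r * a 0 := by
    intro r
    induction r with
    | zero => simp
    | succ n ih => rw [hrec n, ih, pow_succ]; ring
  have hne : (1 : ℝ) - q * θ ≠ 0 := by nlinarith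
  have ha0v : a 0 = (1 - θ) * (1 - q * θ) := by
    have hs : (∑' n : ℕ, q ^ n / qint q (n + 1) * pN n) = ∑' n : ℕ, (q * θ) ^ n * a 0 := by
      congr 1; funext n
      rw [div_mul_eq_mul_div, mul_div_assoc]
      show q ^ n * a n = (q * θ) ^ n * a 0
      rw [hgeom n, mul_pow]; ring
    rw [hs, tsum_mul_right, tsum_geometric_of_lt_one hqθ0.le hqθ1] at hθdef
    have h5 : (1 - q * θ)⁻¹ * a 0 = 1 - θ := by linarith
    field_simp at h5
    linarith
  constructor
  · intro r
    have hp : pN r = a r * qint q (r + 1) := by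
      rw [ha]; simp only
      rw [div_mul_cancel₀ _ (hqpos r).ne']
    rw [hp, hgeom r, ha0v]; ring
  · intro r hr
    obtain ⟨k, rfl⟩ : ∃ k, r = k + 1 := ⟨r - 1, by omega⟩
    have : pN (k + 1) / qint q (k + 1 + 1) = a (k + 1) := rfl
    rw [this, hrec k]
    simp [ha]
end
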